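/- arXiv:2410.08028 — 4 statements merged into one kernel-verified Lean document; each statement's English description precedes it below -/
import Mathlib

section
/- Let P(z) = z^3 + a z^2 + b z + c be a cubic polynomial with complex coefficients such that 0 < 1 - |c|^2 ≤ |a·conj(c) - conj(b)|. Then P has a root r with |r| ≥ 1. -/
/-!
Suppose every root of `P` lies in the open unit disk and let
`P*(z) = z³ · conj (P (1 / conj z)) = 1 + conj a z + conj b z² + conj c z³`.
For `|w| ≥ 1` each Blaschke-type factor satisfies `|1 - conj r w| ≤ |w - r|`, so
`|P*(w)| ≤ |P(w)| ≠ 0`, and since `|c| < 1` the equation `P(w) = c P*(w)` has no solution with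
`|w| ≥ 1`. But `P(w) - c P*(w) = w q(w)` for the quadratic
`q(w) = (1 - |c|²) w² + (a - c conj b) w + (b - c conj a)`, whose roots have product of modulus
`|a conj c - conj b| / (1 - |c|²) ≥ 1`; so one of them has modulus at least `1`.
-/

open Complex ComplexConjugate

lemma exists_cubic_vieta (a b c : ℂ) :
    ∃ r₁ r₂ r₃ : ℂ, a = -(r₁ + r₂ + r₃) ∧ b = r₁ * r₂ + r₁ * r₃ + r₂ * r₃ ∧ c = -(r₁ * r₂ * r₃) := by
  set P : Cubic ℂ := ⟨1, a, b, c⟩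
  have hP : P.a ≠ 0 := one_ne_zero
  obtain ⟨x, y, z, h3⟩ :=
    (Cubic.splits_iff_roots_eq_three (φ := RingHom.id ℂ) hP).mp (IsAlgClosed.splits _)
  refine ⟨x, y, z, ?_, ?_, ?_⟩
  · simpa [P] using Cubic.b_eq_three_roots hP h3
  · simpa [P] using Cubic.c_eq_three_roots hP h3
  · simpa [P] using Cubic.d_eq_three_roots hP h3

lemma exists_quadratic_factor {A : ℂ} (hA : A ≠ 0) (B C : ℂ) :
    ∃ u v : ℂ, ∀ z, A * z ^ 2 + B * z + C = A * (z - u) * (z - v) := by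
  obtain ⟨s, hs⟩ := IsAlgClosed.exists_eq_mul_self (discrim A B C)
  refine ⟨(-B + s) / (2 * A), (-B - s) / (2 * A), fun z => ?_⟩
  rw [discrim] at hs
  field_simp
  linear_combination -hs

lemma exists_root_quadratic_one_le_norm {A : ℂ} (hA : A ≠ 0) (B : ℂ) {C : ℂ} (h : ‖A‖ ≤ ‖C‖) :
    ∃ w : ℂ, 1 ≤ ‖w‖ ∧ A * w ^ 2 + B * w + C = 0 := by
  obtain ⟨u, v, hq⟩ := exists_quadratic_factor hA B C
  have huv : 1 ≤ ‖u‖ * ‖v‖ := by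
    have hC : C = A * (u * v) := by simpa [mul_assoc] using hq 0
    rwa [hC, norm_mul, le_mul_iff_one_le_right (norm_pos_iff.mpr hA), norm_mul] at h
  by_cases hu : 1 ≤ ‖u‖
  · exact ⟨u, hu, by simp [hq]⟩
  · refine ⟨v, ?_, by simp [hq]⟩
    nlinarith [norm_nonneg u, norm_nonneg v]

lemma norm_one_sub_conj_mul_le_norm_sub {r w : ℂ} (hr : ‖r‖ ≤ 1) (hw : 1 ≤ ‖w‖) :
    ‖1 - conj r * w‖ ≤ ‖w - r‖ := by
  have key : normSq (w - r) - normSq (1 - conj r * w) = (normSq w - 1) * (1 - normSq r) := by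
    simp only [normSq_apply, mul_re, mul_im, sub_re, sub_im, one_re, one_im, conj_re, conj_im]
    ring
  simp only [normSq_eq_norm_sq] at key
  refine (pow_le_pow_iff_left₀ (norm_nonneg _) (norm_nonneg _) two_ne_zero).mp ?_
  nlinarith [mul_nonneg (sub_nonneg.mpr (one_le_pow₀ (n := 2) hw))
    (sub_nonneg.mpr (pow_le_one₀ (n := 2) (norm_nonneg r) hr))]

lemma norm_prod_one_sub_conj_mul_le {ι : Type*} (s : Finset ι) {r : ι → ℂ} {w : ℂ}
    (hr : ∀ i ∈ s, ‖r i‖ ≤ 1) (hw : 1 ≤ ‖w‖) :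
    ‖∏ i ∈ s, (1 - conj (r i) * w)‖ ≤ ‖∏ i ∈ s, (w - r i)‖ := by
  simp only [norm_prod]
  exact Finset.prod_le_prod (fun _ _ => norm_nonneg _)
    fun i hi => norm_one_sub_conj_mul_le_norm_sub (hr i hi) hw

lemma prod_sub_ne_mul_prod_one_sub_conj_mul {ι : Type*} (s : Finset ι) {r : ι → ℂ} {c w : ℂ}
    (hr : ∀ i ∈ s, ‖r i‖ < 1) (hc : ‖c‖ < 1) (hw : 1 ≤ ‖w‖) :
    ∏ i ∈ s, (w - r i) ≠ c * ∏ i ∈ s, (1 - conj (r i) * w) := by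
  intro h
  have hpos : 0 < ‖∏ i ∈ s, (w - r i)‖ := by
    refine norm_pos_iff.mpr (Finset.prod_ne_zero_iff.mpr fun i hi hwr => ?_)
    have := hr i hi
    rw [← sub_eq_zero.mp hwr] at this
    linarith
  have hle := norm_prod_one_sub_conj_mul_le s (fun i hi => (hr i hi).le) hw
  have : ‖∏ i ∈ s, (w - r i)‖ < ‖∏ i ∈ s, (w - r i)‖ :=
    calc ‖∏ i ∈ s, (w - r i)‖ = ‖c‖ * ‖∏ i ∈ s, (1 - conj (r i) * w)‖ := by rw [h, norm_mul]
      _ ≤ ‖c‖ * ‖∏ i ∈ s, (w - r i)‖ := by gcongr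
      _ < ‖∏ i ∈ s, (w - r i)‖ := mul_lt_of_lt_one_left hpos hc
  exact this.false

/-- Lemma `lem:polyunstable`: if `P(z) = z^3 + a z^2 + b z + c` satisfies
`0 < 1 - |c|^2 ≤ |a * conj c - conj b|`, then `P` has a root `r` with `|r| ≥ 1`. -/
theorem cubic_has_root_outside_disk (a b c : ℂ)
    (h₁ : 0 < 1 - ‖c‖ ^ 2)
    (h₂ : 1 - ‖c‖ ^ 2 ≤ ‖a * (starRingEnd ℂ) c - (starRingEnd ℂ) b‖) :
    ∃ r : ℂ, r ^ 3 + a * r ^ 2 + b * r + c = 0 ∧ 1 ≤ ‖r‖ := by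
  by_contra! hP
  have hc : ‖c‖ < 1 := (sq_lt_one_iff₀ (norm_nonneg c)).mp (by linarith)
  have hA : 1 - c * conj c = ((1 - ‖c‖ ^ 2 : ℝ) : ℂ) := by
    rw [mul_conj, normSq_eq_norm_sq]; push_cast; ring
  have hC : ‖b - c * conj a‖ = ‖a * conj c - conj b‖ := by
    rw [← norm_neg, ← norm_conj, neg_sub, map_sub, map_mul, conj_conj, mul_comm]
  obtain ⟨w, hw, hq⟩ := exists_root_quadratic_one_le_norm (A := 1 - c * conj c)
    (C := b - c * conj a) (by rw [hA]; exact_mod_cast h₁.ne') (a - c * conj b)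
    (by rwa [hA, hC, norm_real, Real.norm_of_nonneg h₁.le])
  obtain ⟨r₁, r₂, r₃, rfl, rfl, rfl⟩ := exists_cubic_vieta a b c
  have hr : ∀ i, ‖![r₁, r₂, r₃] i‖ < 1 := by
    intro i
    fin_cases i
    exacts [hP r₁ (by ring), hP r₂ (by ring), hP r₃ (by ring)]
  refine prod_sub_ne_mul_prod_one_sub_conj_mul Finset.univ (fun i _ => hr i) hc hw ?_
  simp only [map_neg, map_add, map_mul] at hq
  simp only [Fin.prod_univ_three, Matrix.cons_val_zero, Matrix.cons_val_one, Matrix.cons_val_two,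
    Matrix.tail_cons, Matrix.head_cons]
  linear_combination w * hq
end

section
/- The subgroup Sp(2n, ℚ) of rational symplectic matrices is dense in the real symplectic group Sp(2n, ℝ). -/
/-!
The Cayley transform `A ↦ (1 - A) (1 + A)⁻¹` is an involution exchanging Hamiltonian matrices
(`Aᵀ J + J A = 0`) and symplectic matrices, among those `A` with `1 + A` invertible, and it maps
rational matrices to rational matrices. Projecting rational approximations of a Hamiltonian matrix
onto the Hamiltonian subspace shows that rational Hamiltonian matrices are dense among Hamiltonian
ones, so a symplectic `M` with `det (1 + M) ≠ 0` is a limit of rational symplectic matrices.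
A general symplectic `M` is written `M = cayley (t J) * N` with `t` rational; `1 + N` is
invertible iff `det (1 + M + t J (M - 1)) ≠ 0`, and this linear pencil in `t` is regular because
for symplectic `M` the kernel of `1 + M` meets the preimage of its range under `J (M - 1)` only
in `0`. Finally the rational symplectic matrices are closed under multiplication.
-/

open Matrix

namespace Matrix

open Polynomial

variable {ι : Type*} [Fintype ι] [DecidableEq ι]

section Pencil

variable {K : Type*} [Field K]

omit [DecidableEq ι] in
lemma coeff_map_C_mulVec (N : Matrix ι ι K) (w : ι → K[X]) (i : ι) (k : ℕ) :
    ((N.map C *ᵥ w) i).coeff k = (N *ᵥ fun j ↦ (w j).coeff k) i := by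
  simp [mulVec, dotProduct, coeff_C_mul]

theorem det_map_C_add_X_smul_ne_zero {A B : Matrix ι ι K}
    (h : ∀ u v, A *ᵥ v = 0 → A *ᵥ u + B *ᵥ v = 0 → v = 0) :
    (A.map C + (X : K[X]) • B.map C).det ≠ 0 := by
  classical
  intro hdet
  obtain ⟨v, hv0, hv⟩ := exists_mulVec_eq_zero_iff.mpr hdet
  obtain ⟨i₀, -⟩ := Function.ne_iff.mp hv0
  -- dividing out the gcd of the entries leaves a kernel vector whose constant terms are not all `0`
  obtain ⟨w, hvw, hw1⟩ := Finset.univ.extract_gcd v ⟨i₀, Finset.mem_univ _⟩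
  have hgcd : Finset.univ.gcd v ≠ 0 := fun h0 ↦
    hv0 (funext fun i ↦ Finset.gcd_eq_zero_iff.mp h0 i (Finset.mem_univ i))
  have hw : (A.map C + (X : K[X]) • B.map C) *ᵥ w = 0 := by
    have hvw' : v = Finset.univ.gcd v • w := funext fun i ↦ hvw i (Finset.mem_univ i)
    rw [hvw', mulVec_smul] at hv
    exact (smul_eq_zero.mp hv).resolve_left hgcd
  have hentry (i : ι) : ((A.map C + (X : K[X]) • B.map C) *ᵥ w) i
      = (A.map C *ᵥ w) i + X * (B.map C *ᵥ w) i := by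
    simp [add_mulVec, smul_mulVec]
  have hcoeff₀ : A *ᵥ (fun j ↦ (w j).coeff 0) = 0 := funext fun i ↦ by
    simpa [hentry, coeff_map_C_mulVec] using congrArg (coeff · 0) (congrFun hw i)
  have hcoeff₁ : A *ᵥ (fun j ↦ (w j).coeff 1) + B *ᵥ (fun j ↦ (w j).coeff 0) = 0 :=
    funext fun i ↦ by
      simpa [hentry, coeff_map_C_mulVec, coeff_X_mul] using congrArg (coeff · 1) (congrFun hw i)
  have hX : X ∣ Finset.univ.gcd w := Finset.dvd_gcd fun j _ ↦
    X_dvd_iff.mpr (congrFun (h _ _ hcoeff₀ hcoeff₁) j)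
  rw [hw1] at hX
  exact not_isUnit_X (isUnit_of_dvd_one hX)

theorem exists_rat_det_add_smul_ne_zero [CharZero K] {A B : Matrix ι ι K}
    (h : ∀ u v, A *ᵥ v = 0 → A *ᵥ u + B *ᵥ v = 0 → v = 0) :
    ∃ t : ℚ, (A + (t : K) • B).det ≠ 0 := by
  by_contra! hroots
  refine det_map_C_add_X_smul_ne_zero h
    (eq_zero_of_infinite_isRoot _ (Set.infinite_of_injective_forall_mem Rat.cast_injective ?_))
  intro t
  have heval :
      (evalRingHom (t : K)).mapMatrix (A.map C + (X : K[X]) • B.map C) = A + (t : K) • B := by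
    ext i j; simp [mul_comm _ (B i j)]
  change eval _ _ = 0
  rw [← coe_evalRingHom, RingHom.map_det, heval]
  exact hroots t

end Pencil

section Symplectic

variable {R : Type*} [CommRing R]

def IsSymplectic (J M : Matrix ι ι R) : Prop := Mᵀ * J * M = J

def IsHamiltonian (J A : Matrix ι ι R) : Prop := Aᵀ * J + J * A = 0

omit [DecidableEq ι] in
lemma IsSymplectic.mul {J M N : Matrix ι ι R} (hM : IsSymplectic J M) (hN : IsSymplectic J N) :
    IsSymplectic J (M * N) := by
  unfold IsSymplectic at *
  rw [transpose_mul, show Nᵀ * Mᵀ * J * (M * N) = Nᵀ * (Mᵀ * J * M) * N by noncomm_ring, hM, hN]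

end Symplectic

section Cayley

variable {K : Type*} [Field K]

noncomputable def cayley (A : Matrix ι ι K) : Matrix ι ι K := (1 - A) * (1 + A)⁻¹

variable {A : Matrix ι ι K}

lemma one_add_mul_cayley (h : IsUnit (1 + A).det) : (1 + A) * cayley A = 1 - A := by
  rw [cayley, ← Matrix.mul_assoc, show (1 + A) * (1 - A) = (1 - A) * (1 + A) by noncomm_ring,
    Matrix.mul_assoc, mul_nonsing_inv _ h, Matrix.mul_one]

lemma cayley_mul_one_add (h : IsUnit (1 + A).det) : cayley A * (1 + A) = 1 - A := by
  rw [cayley, Matrix.mul_assoc, nonsing_inv_mul _ h, Matrix.mul_one]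

lemma cayley_mul_cayley_neg (h₁ : IsUnit (1 + A).det) (h₂ : IsUnit (1 - A).det) :
    cayley A * cayley (-A) = 1 := by
  rw [cayley, cayley, sub_neg_eq_add, ← sub_eq_add_neg, Matrix.mul_assoc,
    ← Matrix.mul_assoc (1 + A)⁻¹, nonsing_inv_mul _ h₁, Matrix.one_mul, mul_nonsing_inv _ h₂]

lemma one_add_cayley (h : IsUnit (1 + A).det) : 1 + cayley A = (2 : K) • (1 + A)⁻¹ := by
  calc 1 + cayley A = ((1 + A) + (1 - A)) * (1 + A)⁻¹ := by
        rw [cayley, Matrix.add_mul, mul_nonsing_inv _ h]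
    _ = (2 : K) • (1 + A)⁻¹ := by
        rw [add_add_sub_cancel, ← two_smul K, smul_mul_assoc, Matrix.one_mul]

lemma one_sub_cayley (h : IsUnit (1 + A).det) : 1 - cayley A = (2 : K) • (A * (1 + A)⁻¹) := by
  calc 1 - cayley A = ((1 + A) - (1 - A)) * (1 + A)⁻¹ := by
        rw [cayley, Matrix.sub_mul (1 + A), mul_nonsing_inv _ h]
    _ = (2 : K) • (A * (1 + A)⁻¹) := by
        rw [add_sub_sub_cancel, ← two_smul K, smul_mul_assoc]

lemma isUnit_det_one_add_cayley [NeZero (2 : K)] (h : IsUnit (1 + A).det) :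
    IsUnit (1 + cayley A).det := by
  rw [one_add_cayley h, det_smul]
  exact (isUnit_iff_ne_zero.mpr (pow_ne_zero _ two_ne_zero)).mul (isUnit_nonsing_inv_det _ h)

lemma cayley_cayley [NeZero (2 : K)] (h : IsUnit (1 + A).det) : cayley (cayley A) = A := by
  have hinv : (1 + cayley A)⁻¹ = (2 : K)⁻¹ • (1 + A) := by
    refine inv_eq_right_inv ?_
    rw [one_add_cayley h, smul_mul_smul, nonsing_inv_mul _ h, mul_inv_cancel₀ two_ne_zero,
      one_smul]
  rw [cayley, one_sub_cayley h, hinv, smul_mul_smul, mul_inv_cancel₀ two_ne_zero, one_smul,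
    Matrix.mul_assoc, nonsing_inv_mul _ h, Matrix.mul_one]

lemma isSymplectic_cayley_iff [NeZero (2 : K)] {J : Matrix ι ι K} (h : IsUnit (1 + A).det) :
    IsSymplectic J (cayley A) ↔ IsHamiltonian J A := by
  have hu : IsUnit (1 + A) := (isUnit_iff_isUnit_det _).mpr h
  have hut : IsUnit (1 + A)ᵀ := (isUnit_iff_isUnit_det _).mpr (by rwa [det_transpose])
  have key : (1 + A)ᵀ * ((cayley A)ᵀ * J * cayley A - J) * (1 + A)
      = -(2 : K) • (Aᵀ * J + J * A) := by
    calc (1 + A)ᵀ * ((cayley A)ᵀ * J * cayley A - J) * (1 + A)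
        = (cayley A * (1 + A))ᵀ * J * (cayley A * (1 + A)) - (1 + A)ᵀ * J * (1 + A) := by
          rw [transpose_mul]; noncomm_ring
      _ = -(2 : K) • (Aᵀ * J + J * A) := by
          rw [cayley_mul_one_add h]
          simp only [transpose_sub, transpose_add, transpose_one, Matrix.sub_mul, Matrix.mul_sub,
            Matrix.add_mul, Matrix.mul_add, Matrix.one_mul, Matrix.mul_one]
          module
  rw [IsSymplectic, IsHamiltonian, ← sub_eq_zero, ← hut.mul_right_eq_zero,
    ← hu.mul_left_eq_zero, key, smul_eq_zero]
  simp [two_ne_zero]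

end Cayley

section HamiltonianPart

variable {K : Type*} [Field K]

def hamiltonianPart (J X : Matrix ι ι K) : Matrix ι ι K := (2 : K)⁻¹ • (X + J * Xᵀ * J)

lemma isHamiltonian_hamiltonianPart {J : Matrix ι ι K} (hJ : Jᵀ = -J) (hJJ : J * J = -1)
    (X : Matrix ι ι K) : IsHamiltonian J (hamiltonianPart J X) := by
  have htr : (hamiltonianPart J X)ᵀ = (2 : K)⁻¹ • (Xᵀ + J * X * J) := by
    simp [hamiltonianPart, hJ, Matrix.mul_assoc]
  have hsum : (Xᵀ + J * X * J) * J + J * (X + J * Xᵀ * J) = 0 := by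
    calc (Xᵀ + J * X * J) * J + J * (X + J * Xᵀ * J)
        = Xᵀ * J + J * X * (J * J) + J * X + (J * J) * Xᵀ * J := by noncomm_ring
      _ = 0 := by rw [hJJ]; noncomm_ring
  rw [IsHamiltonian, htr, hamiltonianPart, smul_mul_assoc, mul_smul_comm, ← smul_add, hsum,
    smul_zero]

lemma IsHamiltonian.hamiltonianPart_eq [NeZero (2 : K)] {J A : Matrix ι ι K} (hJJ : J * J = -1)
    (hA : IsHamiltonian J A) : hamiltonianPart J A = A := by
  have hJAJ : J * Aᵀ * J = A := by
    rw [Matrix.mul_assoc, eq_neg_of_add_eq_zero_left hA, Matrix.mul_neg, ← Matrix.mul_assoc, hJJ,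
      Matrix.neg_mul, Matrix.one_mul, neg_neg]
  rw [hamiltonianPart, hJAJ, ← two_smul K, smul_smul, inv_mul_cancel₀ two_ne_zero, one_smul]

omit [DecidableEq ι] in
lemma continuous_hamiltonianPart [TopologicalSpace K] [IsTopologicalRing K] (J : Matrix ι ι K) :
    Continuous (hamiltonianPart J) := by
  unfold hamiltonianPart
  fun_prop

end HamiltonianPart

section Map

variable {K L : Type*} [Field K] [Field L] (f : K →+* L)

lemma _root_.RingHom.map_nonsing_inv (A : Matrix ι ι K) : f.mapMatrix A⁻¹ = (f.mapMatrix A)⁻¹ := by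
  rw [inv_def, inv_def, ← RingHom.map_det, ← RingHom.map_adjugate, Ring.inverse_eq_inv',
    Ring.inverse_eq_inv', ← map_inv₀]
  ext i j
  simp

lemma _root_.RingHom.map_cayley (A : Matrix ι ι K) :
    f.mapMatrix (cayley A) = cayley (f.mapMatrix A) := by
  rw [cayley, cayley, map_mul, map_sub, RingHom.map_nonsing_inv, map_add, map_one]

lemma _root_.RingHom.map_hamiltonianPart (J X : Matrix ι ι K) :
    f.mapMatrix (hamiltonianPart J X) = hamiltonianPart (f.mapMatrix J) (f.mapMatrix X) := by
  ext i j
  simp [hamiltonianPart, Matrix.mul_apply, map_ofNat, mul_add]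

end Map

lemma continuousAt_cayley {K : Type*} [Field K] [TopologicalSpace K] [IsTopologicalRing K]
    [ContinuousInv₀ K] {A : Matrix ι ι K} (h : (1 + A).det ≠ 0) : ContinuousAt cayley A := by
  have hinv : ContinuousAt Inv.inv (1 + A) :=
    continuousAt_matrix_inv _ (by rw [Ring.inverse_eq_inv']; exact continuousAt_inv₀ h)
  exact (continuous_const.sub continuous_id).continuousAt.mul
    (hinv.comp (continuous_const.add continuous_id).continuousAt)

section Rational

variable (ι) in
noncomputable def rationalMatrices : Subring (Matrix ι ι ℝ) := (Rat.castHom ℝ).mapMatrix.range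

lemma mem_rationalMatrices_iff {M : Matrix ι ι ℝ} :
    M ∈ rationalMatrices ι ↔ ∀ i j, ∃ q : ℚ, M i j = q := by
  refine ⟨?_, fun h ↦ ?_⟩
  · rintro ⟨Q, rfl⟩ i j
    exact ⟨Q i j, rfl⟩
  · choose Q hQ using h
    exact ⟨Matrix.of Q, by ext i j; simp [hQ]⟩

lemma dense_rationalMatrices : Dense (rationalMatrices ι : Set (Matrix ι ι ℝ)) :=
  DenseRange.piMap fun _ ↦ DenseRange.piMap fun _ ↦ Rat.denseRange_cast

lemma cayley_mem_rationalMatrices {A : Matrix ι ι ℝ} (hA : A ∈ rationalMatrices ι) :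
    cayley A ∈ rationalMatrices ι := by
  obtain ⟨Q, rfl⟩ := hA
  exact ⟨cayley Q, RingHom.map_cayley _ Q⟩

lemma hamiltonianPart_mem_rationalMatrices {J X : Matrix ι ι ℝ} (hJ : J ∈ rationalMatrices ι)
    (hX : X ∈ rationalMatrices ι) : hamiltonianPart J X ∈ rationalMatrices ι := by
  obtain ⟨J, rfl⟩ := hJ
  obtain ⟨X, rfl⟩ := hX
  exact ⟨hamiltonianPart J X, RingHom.map_hamiltonianPart _ J X⟩

lemma ratCast_smul_mem_rationalMatrices (t : ℚ) {X : Matrix ι ι ℝ} (hX : X ∈ rationalMatrices ι) :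
    (t : ℝ) • X ∈ rationalMatrices ι := by
  obtain ⟨X, rfl⟩ := hX
  exact ⟨t • X, by ext i j; simp⟩

end Rational

section Density

variable {J M : Matrix ι ι ℝ}

omit [DecidableEq ι] in
lemma isClosed_setOf_isSymplectic (J : Matrix ι ι ℝ) :
    IsClosed {M : Matrix ι ι ℝ | IsSymplectic J M} :=
  isClosed_eq (by fun_prop) continuous_const

lemma isHamiltonian_smul_self (hJ : Jᵀ = -J) (s : ℝ) : IsHamiltonian J (s • J) := by
  rw [IsHamiltonian, transpose_smul, hJ, smul_mul_assoc, mul_smul_comm, Matrix.neg_mul, smul_neg,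
    neg_add_cancel]

lemma isUnit_det_one_add_smul (hJJ : J * J = -1) (s : ℝ) : IsUnit (1 + s • J).det := by
  have hsq : (1 + s • J) * (1 - s • J) = (1 + s ^ 2) • (1 : Matrix ι ι ℝ) := by
    simp only [Matrix.add_mul, Matrix.mul_sub, Matrix.one_mul, Matrix.mul_one, smul_mul_smul, hJJ]
    module
  refine isUnit_det_of_right_inverse (B := (1 + s ^ 2)⁻¹ • (1 - s • J)) ?_
  rw [mul_smul_comm, hsq, smul_smul, inv_mul_cancel₀ (by positivity), one_smul]

lemma IsSymplectic.eq_zero_of_one_add_mulVec_eq_zero (hJJ : J * J = -1) (hM : IsSymplectic J M)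
    (u v : ι → ℝ) (hv : (1 + M) *ᵥ v = 0) (huv : (1 + M) *ᵥ u + (J * (M - 1)) *ᵥ v = 0) :
    v = 0 := by
  have hMv : M *ᵥ v = -v := by
    rw [add_mulVec, one_mulVec] at hv
    exact eq_neg_of_add_eq_zero_right hv
  have hJv : (1 + M)ᵀ *ᵥ (J *ᵥ v) = 0 := by
    have : Mᵀ *ᵥ (J *ᵥ v) = -(J *ᵥ v) := by
      calc Mᵀ *ᵥ (J *ᵥ v) = -(Mᵀ *ᵥ (J *ᵥ (M *ᵥ v))) := by
            rw [hMv, mulVec_neg, mulVec_neg, neg_neg]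
        _ = -(J *ᵥ v) := by rw [mulVec_mulVec, mulVec_mulVec, show Mᵀ * J * M = J from hM]
    rw [transpose_add, transpose_one, add_mulVec, one_mulVec, this, add_neg_cancel]
  have hu : (1 + M) *ᵥ u = (2 : ℝ) • (J *ᵥ v) := by
    rw [← mulVec_mulVec, sub_mulVec, one_mulVec, hMv] at huv
    rw [eq_neg_of_add_eq_zero_left huv, ← neg_add', mulVec_neg, neg_neg, ← two_smul ℝ v,
      mulVec_smul]
  have hJv0 : J *ᵥ v = 0 := by
    refine dotProduct_self_eq_zero.mp ?_
    have : (J *ᵥ v) ⬝ᵥ ((1 + M) *ᵥ u) = 0 := by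
      rw [dotProduct_mulVec, ← transpose_transpose (1 + M), vecMul_transpose,
        hJv, zero_dotProduct]
    rw [hu, dotProduct_smul, smul_eq_zero] at this
    exact this.resolve_left two_ne_zero
  rw [← neg_neg v, ← one_mulVec v, ← neg_mulVec, ← hJJ, ← mulVec_mulVec, hJv0, mulVec_zero,
    neg_zero]

lemma IsSymplectic.mem_closure_of_isUnit_det_one_add (hJ : Jᵀ = -J) (hJJ : J * J = -1)
    (hJℚ : J ∈ rationalMatrices ι) (hM : IsSymplectic J M) (h : IsUnit (1 + M).det) :
    M ∈ closure {M | IsSymplectic J M ∧ M ∈ rationalMatrices ι} := by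
  set A := cayley M
  have hA1 : IsUnit (1 + A).det := isUnit_det_one_add_cayley h
  have hAM : cayley A = M := cayley_cayley h
  have hA : IsHamiltonian J A := (isSymplectic_cayley_iff hA1).mp (hAM ▸ hM)
  have hπA : hamiltonianPart J A = A := hA.hamiltonianPart_eq hJJ
  -- `cayley ∘ hamiltonianPart` maps rational matrices near `A` to rational symplectic ones near `M`
  set U := {X : Matrix ι ι ℝ | (1 + hamiltonianPart J X).det ≠ 0}
  have hU : IsOpen U :=
    isOpen_ne_fun (continuous_const.add (continuous_hamiltonianPart J)).matrix_det continuous_const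
  have hAU : A ∈ U := by
    show (1 + hamiltonianPart J A).det ≠ 0
    rw [hπA]
    exact hA1.ne_zero
  have hcont : ContinuousAt (cayley ∘ hamiltonianPart J) A :=
    (continuousAt_cayley hAU).comp (continuous_hamiltonianPart J).continuousAt
  have hmem := hcont.continuousWithinAt.mem_closure_image
    (dense_rationalMatrices.open_subset_closure_inter hU hAU)
  rw [Function.comp_apply, hπA, hAM] at hmem
  refine closure_mono ?_ hmem
  rintro _ ⟨X, ⟨hXU, hXℚ⟩, rfl⟩
  exact ⟨(isSymplectic_cayley_iff (isUnit_iff_ne_zero.mpr hXU)).mpr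
      (isHamiltonian_hamiltonianPart hJ hJJ X),
    cayley_mem_rationalMatrices (hamiltonianPart_mem_rationalMatrices hJℚ hXℚ)⟩

theorem IsSymplectic.mem_closure_rational (hJ : Jᵀ = -J) (hJJ : J * J = -1)
    (hJℚ : J ∈ rationalMatrices ι) (hM : IsSymplectic J M) :
    M ∈ closure {M | IsSymplectic J M ∧ M ∈ rationalMatrices ι} := by
  obtain ⟨t, ht⟩ := exists_rat_det_add_smul_ne_zero (hM.eq_zero_of_one_add_mulVec_eq_zero hJJ)
  set Y := (t : ℝ) • J
  have hY : IsUnit (1 + Y).det := isUnit_det_one_add_smul hJJ t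
  have hnegY : IsUnit (1 + -Y).det := by
    rw [← neg_smul]
    exact isUnit_det_one_add_smul hJJ _
  have hg : cayley Y ∈ {M | IsSymplectic J M ∧ M ∈ rationalMatrices ι} :=
    ⟨(isSymplectic_cayley_iff hY).mpr (isHamiltonian_smul_self hJ t),
      cayley_mem_rationalMatrices (ratCast_smul_mem_rationalMatrices t hJℚ)⟩
  set N := cayley (-Y) * M
  have hN : IsSymplectic J N :=
    IsSymplectic.mul ((isSymplectic_cayley_iff hnegY).mpr (by
      rw [← neg_smul]; exact isHamiltonian_smul_self hJ _)) hM
  have hgN : cayley Y * N = M := by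
    rw [← Matrix.mul_assoc, cayley_mul_cayley_neg hY (by rwa [sub_eq_add_neg]), Matrix.one_mul]
  -- the choice of `t` is exactly what puts `N` in the Cayley chart
  have hN1 : IsUnit (1 + N).det := by
    have hfactor : (1 + Y) * (cayley Y * (1 + N)) = 1 + M + (t : ℝ) • (J * (M - 1)) := by
      rw [Matrix.mul_add, Matrix.mul_one, hgN, Matrix.mul_add, one_add_mul_cayley hY]
      simp only [Y, Matrix.add_mul, Matrix.one_mul, smul_mul_assoc, Matrix.mul_sub, Matrix.mul_one,
        smul_sub]
      abel
    refine isUnit_iff_ne_zero.mpr fun h0 ↦ ht ?_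
    rw [← hfactor, det_mul, det_mul, h0, mul_zero, mul_zero]
  rw [← hgN]
  exact map_mem_closure₂ (f := (· * ·)) continuous_mul (subset_closure hg)
    (hN.mem_closure_of_isUnit_det_one_add hJ hJJ hJℚ hN1) fun a ha b hb ↦
      ⟨ha.1.mul hb.1, mul_mem ha.2 hb.2⟩

theorem closure_setOf_isSymplectic_rational (hJ : Jᵀ = -J) (hJJ : J * J = -1)
    (hJℚ : J ∈ rationalMatrices ι) :
    closure {M | IsSymplectic J M ∧ M ∈ rationalMatrices ι} = {M | IsSymplectic J M} :=
  (closure_minimal (fun _ hM ↦ hM.1) (isClosed_setOf_isSymplectic J)).antisymm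
    fun _ hM ↦ IsSymplectic.mem_closure_rational hJ hJJ hJℚ hM

end Density

end Matrix

/-- `Sp(2n, ℚ)` is dense in `Sp(2n, ℝ)`: every real symplectic matrix is a limit of
rational symplectic matrices, i.e. the closure of the set of rational points of the
real symplectic group is the whole real symplectic group. -/
theorem symplectic_rational_dense (n : ℕ) :
    let J : Matrix (Fin n ⊕ Fin n) (Fin n ⊕ Fin n) ℝ :=
      Matrix.fromBlocks 0 1 (-1) 0
    closure {M : Matrix (Fin n ⊕ Fin n) (Fin n ⊕ Fin n) ℝ |
        Mᵀ * J * M = J ∧ ∀ i j, ∃ q : ℚ, M i j = (q : ℝ)}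
      = {M : Matrix (Fin n ⊕ Fin n) (Fin n ⊕ Fin n) ℝ | Mᵀ * J * M = J} := by
  intro J
  have hJ_eq : J = -Matrix.J (Fin n) ℝ := by simp [J, Matrix.J, fromBlocks_neg]
  have hJ : Jᵀ = -J := by rw [hJ_eq, transpose_neg, J_transpose]
  have hJJ : J * J = -1 := by rw [hJ_eq, neg_mul_neg, J_squared]
  have hJℚ : J ∈ rationalMatrices (Fin n ⊕ Fin n) :=
    ⟨fromBlocks 0 1 (-1) 0, by simp [J, fromBlocks_map, Matrix.map_neg, Matrix.map_one]⟩
  simpa only [IsSymplectic, mem_rationalMatrices_iff] using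
    closure_setOf_isSymplectic_rational hJ hJJ hJℚ
end

section
/- Let b₁, b₂, b₃ be an orthonormal basis (over ℝ) of a Lagrangian subspace of ℂ³ with its standard symplectic structure, and let γ₁, γ₂, γ₃ ≥ 0 with γ₁ + γ₂ + γ₃ < 1. Then |Ω(b₁ ∧ b₂ ∧ b₃)| ≥ 1 - γ₁ - γ₂ - γ₃ > 0, where Ω = dz₁∧dz₂∧dz₃ + γ₁ dz₁∧dz̄₂∧dz̄₃ + γ₂ dz̄₁∧dz₂∧dz̄₃ + γ₃ dz̄₁∧dz̄₂∧dz₃. In particular Ω is nonvanishing on every Lagrangian 3-dimensional real subspace of ℂ³. -/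
open Matrix Complex

/-!
On a Lagrangian subspace the symplectic form is the imaginary part of the Hermitian inner
product, so a real orthonormal basis `b₁, b₂, b₃` is a unitary basis of `ℂ³`: the matrix `U`
with columns `bⱼ` is unitary. Each of the four terms of `Ω(b₁ ∧ b₂ ∧ b₃)` is the determinant of
the matrix whose rows are the rows of `U`, some of them conjugated. For the holomorphic volume
form this is `det U`, of modulus one; the others have unit rows, hence modulus at most one by
Hadamard's inequality, which in dimension three is Cauchy–Schwarz for `u ⬝ (v × w)` together with
Lagrange's identity `‖v × w‖² + |⟪v, w⟫|² = ‖v‖² ‖w‖²`. The triangle inequality concludes.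
-/

open WithLp

section Hadamard

variable {𝕜 : Type*} [RCLike 𝕜]

theorem star_cross {R : Type*} [CommRing R] [StarRing R] (v w : Fin 3 → R) :
    star (v ⨯₃ w) = star v ⨯₃ star w := by
  ext i
  fin_cases i <;> simp [cross_apply, mul_comm]

theorem norm_toLp_star {n : Type*} [Fintype n] (v : n → 𝕜) :
    ‖toLp 2 (star v)‖ = ‖toLp 2 v‖ := by
  simp [EuclideanSpace.norm_eq]

theorem norm_cross_sq_add_norm_inner_sq (v w : Fin 3 → 𝕜) :
    ‖toLp 2 (v ⨯₃ w)‖ ^ 2 + ‖inner 𝕜 (toLp 2 v) (toLp 2 w)‖ ^ 2 =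
      ‖toLp 2 v‖ ^ 2 * ‖toLp 2 w‖ ^ 2 := by
  apply RCLike.ofReal_injective (K := 𝕜)
  push_cast
  rw [← RCLike.conj_mul, inner_conj_symm]
  simp only [← inner_self_eq_norm_sq_to_K, EuclideanSpace.inner_toLp_toLp, star_cross,
    cross_dot_cross]
  ring

theorem norm_cross_le (v w : Fin 3 → 𝕜) :
    ‖toLp 2 (v ⨯₃ w)‖ ≤ ‖toLp 2 v‖ * ‖toLp 2 w‖ := by
  apply le_of_sq_le_sq _ (by positivity)
  nlinarith [norm_cross_sq_add_norm_inner_sq v w, sq_nonneg ‖inner 𝕜 (toLp 2 v) (toLp 2 w)‖]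

theorem norm_det_fin_three_le (M : Matrix (Fin 3) (Fin 3) 𝕜) :
    ‖M.det‖ ≤ ‖toLp 2 (M 0)‖ * ‖toLp 2 (M 1)‖ * ‖toLp 2 (M 2)‖ := by
  have hdet : M.det = inner 𝕜 (toLp 2 (star (M 1 ⨯₃ M 2))) (toLp 2 (M 0)) := by
    rw [EuclideanSpace.inner_toLp_toLp, star_star, triple_product_eq_det]
    congr
    ext i
    fin_cases i <;> rfl
  calc ‖M.det‖ ≤ ‖toLp 2 (star (M 1 ⨯₃ M 2))‖ * ‖toLp 2 (M 0)‖ := hdet ▸ norm_inner_le_norm _ _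
    _ ≤ ‖toLp 2 (M 1)‖ * ‖toLp 2 (M 2)‖ * ‖toLp 2 (M 0)‖ := by
      rw [norm_toLp_star]
      gcongr
      exact norm_cross_le _ _
    _ = _ := by ring

end Hadamard

section Unitary

variable {𝕜 : Type*} [RCLike 𝕜] {n : Type*} [Fintype n] [DecidableEq n]

theorem norm_toLp_row_of_mem_unitaryGroup {U : Matrix n n 𝕜} (hU : U ∈ unitaryGroup n 𝕜)
    (i : n) : ‖toLp 2 (U i)‖ = 1 := by
  have h := congrFun (congrFun (mem_unitaryGroup_iff.mp hU) i) i
  rw [mul_apply', one_apply_eq] at h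
  change inner 𝕜 (toLp 2 (U i)) (toLp 2 (U i)) = 1 at h
  rw [inner_self_eq_norm_sq_to_K] at h
  exact (pow_eq_one_iff_of_nonneg (norm_nonneg _) two_ne_zero).mp (mod_cast h)

theorem norm_det_of_mem_unitaryGroup {U : Matrix n n 𝕜} (hU : U ∈ unitaryGroup n 𝕜) :
    ‖U.det‖ = 1 :=
  CStarRing.norm_of_mem_unitary (det_of_mem_unitary hU)

end Unitary

theorem dotProduct_star_eq {n : Type*} [Fintype n] (u v : n → ℂ) :
    u ⬝ᵥ star v = (∑ k, ((u k).re * (v k).re + (u k).im * (v k).im) : ℝ)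
      - (∑ k, ((u k).re * (v k).im - (u k).im * (v k).re) : ℝ) * I := by
  apply Complex.ext
  · simp [dotProduct, re_sum]
  · simp [dotProduct, im_sum, neg_add_eq_sub, -Finset.sum_neg_distrib]

theorem mem_unitaryGroup_of_orthonormal_of_isotropic {n : Type*} [Fintype n] [DecidableEq n]
    {b : n → n → ℂ}
    (horth : ∀ i j : n,
      (∑ k, ((b i k).re * (b j k).re + (b i k).im * (b j k).im)) = if i = j then 1 else 0)
    (hlag : ∀ i j : n, (∑ k, ((b i k).re * (b j k).im - (b i k).im * (b j k).re)) = 0) :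
    Matrix.of b ∈ unitaryGroup n ℂ := by
  rw [mem_unitaryGroup_iff]
  ext i j
  change b i ⬝ᵥ star (b j) = _
  rw [dotProduct_star_eq, horth, hlag, one_apply]
  split_ifs <;> simp

section ConjRows

variable {𝕜 : Type*} [RCLike 𝕜] {m n : Type*}

/-- `(conjRows s U).det` is the form `dz₁^{s₁} ∧ ⋯ ∧ dzₙ^{sₙ}`, with `dz^{true} = dz̄`,
evaluated on the columns of `U`. -/
def conjRows (s : m → Bool) (M : Matrix m n 𝕜) : Matrix m n 𝕜 :=
  of fun i => if s i then star (M i) else M i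

theorem norm_toLp_conjRows_apply [Fintype n] (s : m → Bool) (M : Matrix m n 𝕜) (i : m) :
    ‖toLp 2 (conjRows s M i)‖ = ‖toLp 2 (M i)‖ := by
  change ‖toLp 2 (if s i then star (M i) else M i)‖ = _
  split <;> simp [norm_toLp_star]

theorem norm_det_conjRows_le_one {U : Matrix (Fin 3) (Fin 3) 𝕜}
    (hU : U ∈ unitaryGroup (Fin 3) 𝕜) (s : Fin 3 → Bool) : ‖(conjRows s U).det‖ ≤ 1 :=
  (norm_det_fin_three_le _).trans_eq <| by
    simp [norm_toLp_conjRows_apply, norm_toLp_row_of_mem_unitaryGroup hU]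

end ConjRows

theorem one_sub_le_norm_add_ofReal_mul {z₀ z₁ z₂ z₃ : ℂ} (h₀ : ‖z₀‖ = 1) (hz₁ : ‖z₁‖ ≤ 1)
    (hz₂ : ‖z₂‖ ≤ 1) (hz₃ : ‖z₃‖ ≤ 1) {γ₁ γ₂ γ₃ : ℝ} (h₁ : 0 ≤ γ₁) (h₂ : 0 ≤ γ₂)
    (h₃ : 0 ≤ γ₃) : 1 - γ₁ - γ₂ - γ₃ ≤ ‖z₀ + γ₁ * z₁ + γ₂ * z₂ + γ₃ * z₃‖ := by
  have hγ : ∀ {γ : ℝ} {z : ℂ}, 0 ≤ γ → ‖z‖ ≤ 1 → ‖(γ : ℂ) * z‖ ≤ γ := fun hγ hz => by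
    rw [norm_mul, norm_real, Real.norm_of_nonneg hγ]
    exact mul_le_of_le_one_right hγ hz
  set w : ℂ := γ₁ * z₁ + γ₂ * z₂ + γ₃ * z₃
  have hw : ‖w‖ ≤ γ₁ + γ₂ + γ₃ :=
    norm_add₃_le.trans (by linarith [hγ h₁ hz₁, hγ h₂ hz₂, hγ h₃ hz₃])
  calc 1 - γ₁ - γ₂ - γ₃ ≤ ‖z₀‖ - ‖w‖ := by linarith
    _ ≤ ‖z₀ + w‖ := norm_sub_le_norm_add z₀ w
    _ = ‖z₀ + γ₁ * z₁ + γ₂ * z₂ + γ₃ * z₃‖ := by simp only [w, add_assoc]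

/-- Surjectivity estimate from Proposition `prop:u3normalform`: if `b₁, b₂, b₃` is a real
orthonormal basis of a Lagrangian subspace of `ℂ³` and `γ₁, γ₂, γ₃ ≥ 0` with
`γ₁ + γ₂ + γ₃ < 1`, then
`Ω = dz₁∧dz₂∧dz₃ + γ₁ dz₁∧dz̄₂∧dz̄₃ + γ₂ dz̄₁∧dz₂∧dz̄₃ + γ₃ dz̄₁∧dz̄₂∧dz₃`
satisfies `|Ω(b₁∧b₂∧b₃)| ≥ 1 - γ₁ - γ₂ - γ₃ > 0`; in particular `Ω(b₁∧b₂∧b₃) ≠ 0`. -/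
theorem omega_nonvanishing_on_lagrangian (b : Fin 3 → Fin 3 → ℂ)
    (horth : ∀ i j : Fin 3,
      (∑ k : Fin 3, ((b i k).re * (b j k).re + (b i k).im * (b j k).im))
        = if i = j then 1 else 0)
    (hlag : ∀ i j : Fin 3,
      (∑ k : Fin 3, ((b i k).re * (b j k).im - (b i k).im * (b j k).re)) = 0)
    (γ₁ γ₂ γ₃ : ℝ) (h₁ : 0 ≤ γ₁) (h₂ : 0 ≤ γ₂) (h₃ : 0 ≤ γ₃)
    (hsum : γ₁ + γ₂ + γ₃ < 1) :
    let D : (Fin 3 → Bool) → ℂ := fun s =>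
      (Matrix.of fun i j : Fin 3 =>
        if s i then (starRingEnd ℂ) (b j i) else b j i).det
    let Ω : ℂ := D ![false, false, false] + γ₁ * D ![false, true, true]
      + γ₂ * D ![true, false, true] + γ₃ * D ![true, true, false]
    1 - γ₁ - γ₂ - γ₃ ≤ ‖Ω‖ ∧ 0 < 1 - γ₁ - γ₂ - γ₃ ∧ Ω ≠ 0 := by
  intro D Ω
  let U : Matrix (Fin 3) (Fin 3) ℂ := (Matrix.of b)ᵀ
  have hU : U ∈ unitaryGroup (Fin 3) ℂ := transpose_mem_unitaryGroup_iff.mpr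
    (mem_unitaryGroup_of_orthonormal_of_isotropic horth hlag)
  have hD : ∀ s, D s = (conjRows s U).det := fun s => by
    refine congrArg det (Matrix.ext fun i j => ?_)
    change (if s i then _ else _) = (if s i then star (U i) else U i) j
    cases s i <;> rfl
  have hD₀ : ‖(conjRows ![false, false, false] U).det‖ = 1 := by
    rw [show (![false, false, false] : Fin 3 → Bool) = fun _ => false by decide]
    exact norm_det_of_mem_unitaryGroup hU
  have hΩ : 1 - γ₁ - γ₂ - γ₃ ≤ ‖Ω‖ := by
    simp only [Ω, hD]
    exact one_sub_le_norm_add_ofReal_mul hD₀ (norm_det_conjRows_le_one hU _)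
      (norm_det_conjRows_le_one hU _) (norm_det_conjRows_le_one hU _) h₁ h₂ h₃
  refine ⟨hΩ, by linarith, fun hΩ₀ => ?_⟩
  rw [hΩ₀, norm_zero] at hΩ
  linarith
end

section
/- Let Λ be a finite rank free abelian group, Z : Λ → ℂ a group homomorphism, and Q a quadratic form on Λ ⊗ ℝ. Suppose Z factors through quotient lattices Λᵢ (i = 1,…,n) via surjections vᵢ : Λ → Λᵢ with ∩ᵢ ker(vᵢ) = {0}, and there are quadratic forms Qᵢ on Λᵢ ⊗ ℝ such that each Qᵢ is negative definite on ker of the induced map Λᵢ ⊗ ℝ → ℂ. Then for any λᵢ > 0, the quadratic form Q := Σ λᵢ Qᵢ ∘ vᵢ is negative definite on ker(Z) ⊆ Λ ⊗ ℝ. -/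
/-- Lemma `lem:fullsupport` (real form): if a central charge `Z` factors through
surjections `vᵢ` with trivial common kernel, and each `Qᵢ` is negative definite on
`ker gᵢ`, then `Σ λᵢ Qᵢ ∘ vᵢ` is negative definite on `ker Z` for any `λᵢ > 0`. -/
theorem sum_quadratic_neg_def_on_ker {n : ℕ}
    {V : Type*} [AddCommGroup V] [Module ℝ V] [FiniteDimensional ℝ V]
    {W : Fin n → Type*} [∀ i, AddCommGroup (W i)] [∀ i, Module ℝ (W i)]
    [∀ i, FiniteDimensional ℝ (W i)]
    (Z : V →ₗ[ℝ] ℂ) (v : ∀ i, V →ₗ[ℝ] W i) (g : ∀ i, W i →ₗ[ℝ] ℂ)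
    (hsurj : ∀ i, Function.Surjective (v i))
    (hfact : ∀ i, Z = (g i).comp (v i))
    (hker : (⨅ i, LinearMap.ker (v i)) = ⊥)
    (Q : ∀ i, QuadraticForm ℝ (W i))
    (hQ : ∀ i, ∀ w ∈ LinearMap.ker (g i), w ≠ 0 → Q i w < 0)
    (lam : Fin n → ℝ) (hlam : ∀ i, 0 < lam i) :
    ∀ x ∈ LinearMap.ker Z, x ≠ 0 → (∑ i, lam i * Q i (v i x)) < 0 := by
  intro x hx hx0
  have hkeri : ∀ i, v i x ∈ LinearMap.ker (g i) := by
    intro i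
    have := hfact i
    simp only [LinearMap.mem_ker]
    have : Z x = (g i) (v i x) := by rw [this]; rfl
    rw [← this]; exact hx
  have hex : ∃ i, v i x ≠ 0 := by
    by_contra h
    push_neg at h
    have : x ∈ (⨅ i, LinearMap.ker (v i)) := by
      simp only [Submodule.mem_iInf, LinearMap.mem_ker]; exact h
    rw [hker] at this
    exact hx0 (by simpa using this)
  obtain ⟨i, hi⟩ := hex
  have hle : ∀ j ∈ Finset.univ, lam j * Q j (v j x) ≤ 0 := by
    intro j _
    rcases eq_or_ne (v j x) 0 with h | h
    · simp [h]
    · exact le_of_lt (mul_neg_of_pos_of_neg (hlam j) (hQ j _ (hkeri j) h))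
  have hlt : lam i * Q i (v i x) < 0 :=
    mul_neg_of_pos_of_neg (hlam i) (hQ i _ (hkeri i) hi)
  exact Finset.sum_neg' hle ⟨i, Finset.mem_univ i, hlt⟩
end
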